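/- S(π) avoids the classical pattern 321 if and only if π avoids each of the three classical patterns 45231, 35241 and 34251. -/

import Mathlib

/-- Pop from the stack (top first) all letters smaller than `x`;
returns (popped output, remaining stack). -/
def stackPop (x : ℕ) : List ℕ → List ℕ × List ℕ
  | [] => ([], [])
  | t :: ts =>
    if t < x then
      let p := stackPop x ts
      (t :: p.1, p.2)
    else ([], t :: ts)

/-- Run the stack-sorting procedure with the given stack and input;
at the end the (increasing) stack is flushed to the output. -/
def stackRun : List ℕ → List ℕ → List ℕ
  | stack, [] => stack
  | stack, x :: xs =>
    let p := stackPop x stack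
    p.1 ++ stackRun (x :: p.2) xs

/-- The stack-sort operator: one pass of a permutation (word) through a stack. -/
def S (w : List ℕ) : List ℕ := stackRun [] w

/-- `w` is (the one-line notation of) a permutation of `{1, …, n}`. -/
def IsPermOf (w : List ℕ) (n : ℕ) : Prop := w.Perm (List.range' 1 n)

/-- The identity permutation `1 2 ⋯ n` in one-line notation. -/
def idPerm (n : ℕ) : List ℕ := List.range' 1 n

/-- `w` contains the classical pattern 321. -/
def Contains321 (w : List ℕ) : Prop :=
  ∃ i j k : Fin w.length, i < j ∧ j < k ∧ w.get j < w.get i ∧ w.get k < w.get j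

/-- `w` contains the classical pattern 45231. -/
def Contains45231 (w : List ℕ) : Prop :=
  ∃ i1 i2 i3 i4 i5 : Fin w.length, i1 < i2 ∧ i2 < i3 ∧ i3 < i4 ∧ i4 < i5 ∧
    w.get i5 < w.get i3 ∧ w.get i3 < w.get i4 ∧ w.get i4 < w.get i1 ∧
    w.get i1 < w.get i2

/-- `w` contains the classical pattern 35241. -/
def Contains35241 (w : List ℕ) : Prop :=
  ∃ i1 i2 i3 i4 i5 : Fin w.length, i1 < i2 ∧ i2 < i3 ∧ i3 < i4 ∧ i4 < i5 ∧
    w.get i5 < w.get i3 ∧ w.get i3 < w.get i1 ∧ w.get i1 < w.get i4 ∧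
    w.get i4 < w.get i2

/-- `w` contains the classical pattern 34251. -/
def Contains34251 (w : List ℕ) : Prop :=
  ∃ i1 i2 i3 i4 i5 : Fin w.length, i1 < i2 ∧ i2 < i3 ∧ i3 < i4 ∧ i4 < i5 ∧
    w.get i5 < w.get i3 ∧ w.get i3 < w.get i1 ∧ w.get i1 < w.get i2 ∧
    w.get i2 < w.get i4

/-! For letters `a < b`, the stack outputs `b` before `a` exactly when some `c > b` arrives after
`b` and before `a`: `c` pops `b`, while otherwise `a` would be pushed on top of `b`. So `S w`
contains an inversion `b a` iff `w` contains a `231` occurrence `b c a`. A `321` occurrence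
`u v t` of `S w` is two inversions sharing the middle letter; for a permutation the two
`231` occurrences `u d v` and `v e t` merge into `u d v e t` with `v < u < d` and `t < v < e`,
and the position of `e` relative to `u` and `d` yields `45231`, `35241` or `34251`. -/

namespace List

variable {α : Type*}

theorem exists_three_indices_iff_sublist (l : List α) (P : α → α → α → Prop) :
    (∃ i j k : Fin l.length, i < j ∧ j < k ∧ P (l.get i) (l.get j) (l.get k)) ↔
      ∃ x y z, P x y z ∧ [x, y, z] <+ l := by
  constructor
  · rintro ⟨i, j, k, hij, hjk, hP⟩
    have hlt : [i, j, k].Pairwise (· < ·) := by simp [hij, hjk, hij.trans hjk]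
    exact ⟨_, _, _, hP, by simpa using map_getElem_sublist hlt⟩
  · rintro ⟨x, y, z, hP, hl⟩
    obtain ⟨is, his, hlt⟩ := sublist_eq_map_getElem hl
    rcases is with _ | ⟨i, _ | ⟨j, _ | ⟨k, _ | _⟩⟩⟩ <;> simp at his
    obtain ⟨rfl, rfl, rfl⟩ := his
    simp only [pairwise_cons, mem_cons, forall_eq_or_imp] at hlt
    exact ⟨i, j, k, hlt.1.1, hlt.2.1.1, hP⟩

theorem exists_five_indices_iff_sublist (l : List α) (P : α → α → α → α → α → Prop) :
    (∃ i₁ i₂ i₃ i₄ i₅ : Fin l.length, i₁ < i₂ ∧ i₂ < i₃ ∧ i₃ < i₄ ∧ i₄ < i₅ ∧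
      P (l.get i₁) (l.get i₂) (l.get i₃) (l.get i₄) (l.get i₅)) ↔
      ∃ a b c d e, P a b c d e ∧ [a, b, c, d, e] <+ l := by
  constructor
  · rintro ⟨i₁, i₂, i₃, i₄, i₅, h₁₂, h₂₃, h₃₄, h₄₅, hP⟩
    have hlt : [i₁, i₂, i₃, i₄, i₅].Pairwise (· < ·) := by
      simp only [pairwise_cons, mem_cons, forall_eq_or_imp, not_mem_nil, false_imp_iff,
        implies_true, Pairwise.nil, and_true]
      omega
    exact ⟨_, _, _, _, _, hP, by simpa using map_getElem_sublist hlt⟩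
  · rintro ⟨a, b, c, d, e, hP, hl⟩
    obtain ⟨is, his, hlt⟩ := sublist_eq_map_getElem hl
    rcases is with _ | ⟨i₁, _ | ⟨i₂, _ | ⟨i₃, _ | ⟨i₄, _ | ⟨i₅, _ | _⟩⟩⟩⟩⟩ <;> simp at his
    obtain ⟨rfl, rfl, rfl, rfl, rfl⟩ := his
    simp only [pairwise_cons, mem_cons, forall_eq_or_imp] at hlt
    exact ⟨i₁, i₂, i₃, i₄, i₅, hlt.1.1, hlt.2.1.1, hlt.2.2.1.1, hlt.2.2.2.1.1, hP⟩

theorem Nodup.append_cons_sublist {l l₁ l₂ : List α} {v : α} (hl : l.Nodup)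
    (h₁ : l₁ ++ [v] <+ l) (h₂ : v :: l₂ <+ l) : l₁ ++ v :: l₂ <+ l := by
  induction l generalizing l₁ with
  | nil => simp at h₂
  | cons y l ih =>
    obtain ⟨hyl, hl'⟩ := nodup_cons.1 hl
    have hvl : v ∈ l → v :: l₂ <+ l := fun hv =>
      h₂.of_cons_of_ne (by rintro rfl; exact hyl hv)
    rcases sublist_cons_iff.1 h₁ with h₁ | ⟨r, hr, h₁⟩
    · exact (ih hl' h₁ (hvl (h₁.subset (by simp)))).cons y
    · rcases l₁ with _ | ⟨z, l₁⟩
      · obtain ⟨rfl, -⟩ := cons_eq_cons.1 hr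
        exact h₂
      · obtain ⟨rfl, rfl⟩ := cons_eq_cons.1 hr
        exact (ih hl' h₁ (hvl (h₁.subset (by simp)))).cons_cons z

theorem Nodup.append_cons_sublist_iff {l l₁ l₂ : List α} {v : α} (hl : l.Nodup) :
    l₁ ++ v :: l₂ <+ l ↔ l₁ ++ [v] <+ l ∧ v :: l₂ <+ l :=
  ⟨fun h => ⟨((append_sublist_append_left l₁).2 (by simp)).trans h,
    (sublist_append_right l₁ _).trans h⟩, fun h => hl.append_cons_sublist h.1 h.2⟩

theorem pair_sublist_append_iff {a b : α} {l₁ l₂ : List α} :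
    [b, a] <+ l₁ ++ l₂ ↔ [b, a] <+ l₁ ∨ (b ∈ l₁ ∧ a ∈ l₂) ∨ [b, a] <+ l₂ := by
  constructor
  · intro h
    obtain ⟨m₁, m₂, hm, h₁, h₂⟩ := sublist_append_iff.1 h
    rcases m₁ with _ | ⟨_, _ | ⟨_, _ | _⟩⟩ <;> simp at hm
    · exact .inr (.inr (hm ▸ h₂))
    · obtain ⟨rfl, rfl⟩ := hm
      exact .inr (.inl ⟨singleton_sublist.1 h₁, singleton_sublist.1 h₂⟩)
    · obtain ⟨rfl, rfl, rfl⟩ := hm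
      exact .inl h₁
  · rintro (h | ⟨hb, ha⟩ | h)
    · exact h.trans (sublist_append_left _ _)
    · exact (singleton_sublist.2 hb).append (singleton_sublist.2 ha)
    · exact h.trans (sublist_append_right _ _)

theorem Pairwise.not_pair_sublist_of_lt [Preorder α] {l : List α} (hl : l.Pairwise (· ≤ ·))
    {a b : α} (hab : a < b) : ¬ [b, a] <+ l := fun h =>
  not_le_of_gt hab (pairwise_pair.1 (hl.sublist h))

theorem le_of_mem_dropWhile_lt [LinearOrder α] {x : α} {l : List α} (hl : l.Pairwise (· ≤ ·))
    {y : α} (hy : y ∈ l.dropWhile (· < x)) : x ≤ y := by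
  induction l with
  | nil => simp at hy
  | cons t ts ih =>
    obtain ⟨ht, hts⟩ := pairwise_cons.1 hl
    by_cases htx : t < x
    · exact ih hts (by simpa [dropWhile_cons, htx] using hy)
    · rcases mem_cons.1 (by simpa [dropWhile_cons, htx] using hy) with rfl | hy
      · exact not_lt.1 htx
      · exact (not_lt.1 htx).trans (ht y hy)

theorem Pairwise.mem_takeWhile_lt_iff [LinearOrder α] {l : List α} (hl : l.Pairwise (· ≤ ·))
    {x y : α} : y ∈ l.takeWhile (· < x) ↔ y ∈ l ∧ y < x := by
  refine ⟨fun hy => ⟨(takeWhile_sublist _).subset hy, by simpa using mem_takeWhile_imp hy⟩,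
    fun ⟨hy, hyx⟩ => ?_⟩
  rw [← takeWhile_append_dropWhile (p := (· < x)) (l := l), mem_append] at hy
  exact hy.resolve_right fun h => (le_of_mem_dropWhile_lt hl h).not_gt hyx

theorem Pairwise.mem_dropWhile_lt_iff [LinearOrder α] {l : List α} (hl : l.Pairwise (· ≤ ·))
    {x y : α} : y ∈ l.dropWhile (· < x) ↔ y ∈ l ∧ x ≤ y := by
  refine ⟨fun hy => ⟨(dropWhile_sublist _).subset hy, le_of_mem_dropWhile_lt hl hy⟩,
    fun ⟨hy, hxy⟩ => ?_⟩
  rw [← takeWhile_append_dropWhile (p := (· < x)) (l := l), mem_append] at hy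
  exact hy.resolve_left fun h => hxy.not_gt (by simpa using mem_takeWhile_imp h)

end List

open List

theorem stackPop_eq (x : ℕ) (l : List ℕ) :
    stackPop x l = (l.takeWhile (· < x), l.dropWhile (· < x)) := by
  induction l with
  | nil => rfl
  | cons t ts ih => by_cases h : t < x <;> simp [stackPop, h, ih]

theorem stackRun_cons (st : List ℕ) (x : ℕ) (xs : List ℕ) :
    stackRun st (x :: xs) = st.takeWhile (· < x) ++ stackRun (x :: st.dropWhile (· < x)) xs := by
  rw [stackRun, stackPop_eq]

theorem stackRun_perm (st xs : List ℕ) : stackRun st xs ~ st ++ xs := by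
  induction xs generalizing st with
  | nil => simp [stackRun]
  | cons x xs ih =>
    rw [stackRun_cons]
    calc _ ~ st.takeWhile (· < x) ++ (x :: st.dropWhile (· < x) ++ xs) := (ih _).append_left _
      _ ~ st.takeWhile (· < x) ++ (st.dropWhile (· < x) ++ x :: xs) :=
          perm_middle.symm.append_left _
      _ = st ++ x :: xs := by rw [← append_assoc, takeWhile_append_dropWhile]

theorem S_perm (w : List ℕ) : S w ~ w := by
  simpa [S] using stackRun_perm [] w

theorem stackRun_pair_sublist_iff {st : List ℕ} (hst : st.Pairwise (· ≤ ·)) (xs : List ℕ)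
    {a b : ℕ} (hab : a < b) :
    [b, a] <+ stackRun st xs ↔
      (b ∈ st ∧ ∃ c, b < c ∧ [c, a] <+ xs) ∨ ∃ c, b < c ∧ [b, c, a] <+ xs := by
  induction xs generalizing st with
  | nil => simpa [stackRun] using hst.not_pair_sublist_of_lt hab
  | cons x xs ih =>
    have hsorted : (x :: st.dropWhile (· < x)).Pairwise (· ≤ ·) :=
      pairwise_cons.2 ⟨fun y hy => (hst.mem_dropWhile_lt_iff.1 hy).2,
        hst.sublist (dropWhile_sublist _)⟩
    have hnT : ¬ [b, a] <+ st.takeWhile (· < x) :=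
      (hst.sublist (takeWhile_sublist _)).not_pair_sublist_of_lt hab
    rw [stackRun_cons, pair_sublist_append_iff, ih hsorted, (stackRun_perm _ _).mem_iff]
    simp only [hnT, false_or, hst.mem_takeWhile_lt_iff, hst.mem_dropWhile_lt_iff, cons_append,
      mem_cons, mem_append]
    constructor
    · rintro (⟨⟨hb, hbx⟩, rfl | ⟨-, hxa⟩ | ha⟩ | ⟨rfl | ⟨hb, -⟩, c, hbc, hca⟩ | ⟨c, hbc, hbca⟩)
      · omega
      · omega
      · exact .inl ⟨hb, x, hbx, (singleton_sublist.2 ha).cons_cons x⟩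
      · exact .inr ⟨c, hbc, hca.cons_cons _⟩
      · exact .inl ⟨hb, c, hbc, hca.cons x⟩
      · exact .inr ⟨c, hbc, hbca.cons x⟩
    · rintro (⟨hb, c, hbc, hca⟩ | ⟨c, hbc, hbca⟩)
      · rcases sublist_cons_iff.1 hca with hca | ⟨r, hr, ha⟩
        · by_cases hbx : b < x
          · exact .inl ⟨⟨hb, hbx⟩, .inr (.inr (hca.subset (by simp)))⟩
          · exact .inr (.inl ⟨.inr ⟨hb, not_lt.1 hbx⟩, c, hbc, hca⟩)
        · obtain ⟨rfl, rfl⟩ := cons_eq_cons.1 hr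
          exact .inl ⟨⟨hb, hbc⟩, .inr (.inr (singleton_sublist.1 ha))⟩
      · rcases sublist_cons_iff.1 hbca with hbca | ⟨r, hr, hca⟩
        · exact .inr (.inr ⟨c, hbc, hbca⟩)
        · obtain ⟨rfl, rfl⟩ := cons_eq_cons.1 hr
          exact .inr (.inl ⟨.inl rfl, c, hbc, hca⟩)

theorem S_pair_sublist_iff (w : List ℕ) {a b : ℕ} (hab : a < b) :
    [b, a] <+ S w ↔ ∃ c, b < c ∧ [b, c, a] <+ w := by
  simpa [S] using stackRun_pair_sublist_iff .nil w hab

theorem contains321_iff_sublist (l : List ℕ) :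
    Contains321 l ↔ ∃ u v t, (v < u ∧ t < v) ∧ [u, v, t] <+ l :=
  exists_three_indices_iff_sublist l fun u v t => v < u ∧ t < v

theorem contains321_S_iff {w : List ℕ} (hw : w.Nodup) :
    Contains321 (S w) ↔
      ∃ u d v e t, (v < u ∧ u < d ∧ t < v ∧ v < e) ∧ [u, d, v, e, t] <+ w := by
  have hSw : (S w).Nodup := (S_perm w).nodup_iff.2 hw
  rw [contains321_iff_sublist]
  constructor
  · rintro ⟨u, v, t, ⟨hvu, htv⟩, h⟩
    obtain ⟨huv, hvt⟩ := (hSw.append_cons_sublist_iff (l₁ := [u]) (l₂ := [t])).1 h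
    obtain ⟨d, hud, hudv⟩ := (S_pair_sublist_iff w hvu).1 huv
    obtain ⟨e, hve, hvet⟩ := (S_pair_sublist_iff w htv).1 hvt
    exact ⟨u, d, v, e, t, ⟨hvu, hud, htv, hve⟩,
      hw.append_cons_sublist (l₁ := [u, d]) (l₂ := [e, t]) hudv hvet⟩
  · rintro ⟨u, d, v, e, t, ⟨hvu, hud, htv, hve⟩, h⟩
    obtain ⟨hudv, hvet⟩ := (hw.append_cons_sublist_iff (l₁ := [u, d]) (l₂ := [e, t])).1 h
    exact ⟨u, v, t, ⟨hvu, htv⟩, hSw.append_cons_sublist (l₁ := [u]) (l₂ := [t])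
      ((S_pair_sublist_iff w hvu).2 ⟨d, hud, hudv⟩) ((S_pair_sublist_iff w htv).2 ⟨e, hve, hvet⟩)⟩

theorem exists_linked_231_iff {w : List ℕ} (hw : w.Nodup) :
    (∃ u d v e t, (v < u ∧ u < d ∧ t < v ∧ v < e) ∧ [u, d, v, e, t] <+ w) ↔
      Contains45231 w ∨ Contains35241 w ∨ Contains34251 w := by
  have h45231 : Contains45231 w ↔
      ∃ a b c d e, (e < c ∧ c < d ∧ d < a ∧ a < b) ∧ [a, b, c, d, e] <+ w :=
    exists_five_indices_iff_sublist w fun a b c d e => e < c ∧ c < d ∧ d < a ∧ a < b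
  have h35241 : Contains35241 w ↔
      ∃ a b c d e, (e < c ∧ c < a ∧ a < d ∧ d < b) ∧ [a, b, c, d, e] <+ w :=
    exists_five_indices_iff_sublist w fun a b c d e => e < c ∧ c < a ∧ a < d ∧ d < b
  have h34251 : Contains34251 w ↔
      ∃ a b c d e, (e < c ∧ c < a ∧ a < b ∧ b < d) ∧ [a, b, c, d, e] <+ w :=
    exists_five_indices_iff_sublist w fun a b c d e => e < c ∧ c < a ∧ a < b ∧ b < d
  rw [h45231, h35241, h34251]
  constructor
  · rintro ⟨u, d, v, e, t, ⟨hvu, hud, htv, hve⟩, h⟩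
    have hne : e ≠ u ∧ e ≠ d := by
      have := hw.sublist h
      simp only [nodup_cons, mem_cons, not_mem_nil] at this
      omega
    rcases lt_or_gt_of_ne hne.1 with heu | hue
    · exact .inl ⟨u, d, v, e, t, ⟨htv, hve, heu, hud⟩, h⟩
    rcases lt_or_gt_of_ne hne.2 with hed | hde
    · exact .inr (.inl ⟨u, d, v, e, t, ⟨htv, hvu, hue, hed⟩, h⟩)
    · exact .inr (.inr ⟨u, d, v, e, t, ⟨htv, hvu, hud, hde⟩, h⟩)
  · rintro (⟨u, d, v, e, t, ⟨htv, hve, heu, hud⟩, h⟩ | ⟨u, d, v, e, t, ⟨htv, hvu, hue, hed⟩, h⟩ |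
        ⟨u, d, v, e, t, ⟨htv, hvu, hud, hde⟩, h⟩)
    · exact ⟨u, d, v, e, t, ⟨hve.trans heu, hud, htv, hve⟩, h⟩
    · exact ⟨u, d, v, e, t, ⟨hvu, hue.trans hed, htv, hvu.trans hue⟩, h⟩
    · exact ⟨u, d, v, e, t, ⟨hvu, hud, htv, hvu.trans (hud.trans hde)⟩, h⟩

/-- `S(π)` avoids 321 iff `π` avoids 45231, 35241 and 34251. -/
theorem S_avoids321_iff (n : ℕ) (w : List ℕ) (hw : IsPermOf w n) :
    ¬ Contains321 (S w) ↔
      ¬ Contains45231 w ∧ ¬ Contains35241 w ∧ ¬ Contains34251 w := by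
  have hnd : w.Nodup := hw.nodup_iff.2 nodup_range'
  rw [contains321_S_iff hnd, exists_linked_231_iff hnd, not_or, not_or]
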